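/- arXiv:1004.3253 — 5 statements merged into one kernel-verified Lean document; each statement's English description precedes it below -/
import Mathlib

section
/- Let K be a field and n ≥ 2. For z ∈ K^n with pairwise distinct coordinates and a, b ∈ K^n, the elements A = Σ_{i<j} ((a_i - a_j)/(z_i - z_j)) t_{ij} and B = Σ_{i<j} ((b_i - b_j)/(z_i - z_j)) t_{ij} commute in the Kohno–Drinfeld Lie algebra t_n, i.e., the coefficient of [t_{ij}, t_{ik}] in [A, B] vanishes for all i < j < k. -/
open Finset

private lemma my_sum_lie {ι L : Type*} [LieRing L] (s : Finset ι) (f : ι → L) (x : L) :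
    ⁅∑ i ∈ s, f i, x⁆ = ∑ i ∈ s, ⁅f i, x⁆ :=
  map_sum (AddMonoidHom.mk' (fun y => ⁅y, x⁆) (fun a b => add_lie a b x)) f s

private lemma my_lie_sum {ι L : Type*} [LieRing L] (x : L) (s : Finset ι) (f : ι → L) :
    ⁅x, ∑ i ∈ s, f i⁆ = ∑ i ∈ s, ⁅x, f i⁆ :=
  map_sum (AddMonoidHom.mk' (fun y => ⁅x, y⁆) (lie_add x)) f s

/-- In the Kohno–Drinfeld Lie algebra `t_n` (formalized here as any Lie algebra with
generators `t i j = t j i` satisfying the Kohno–Drinfeld relations), for `z` with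
pairwise distinct coordinates and any `a b : Kⁿ`, the Gaudin elements
`A = Σ_{i<j} ((a i - a j)/(z i - z j)) • t i j` and
`B = Σ_{i<j} ((b i - b j)/(z i - z j)) • t i j` commute. -/
theorem gaudin_elements_commute
    (K : Type*) [Field K] (n : ℕ) (hn : 2 ≤ n)
    (L : Type*) [LieRing L] [LieAlgebra K L]
    (t : Fin n → Fin n → L)
    (hsymm : ∀ i j, t i j = t j i)
    (hrel1 : ∀ i j k l : Fin n, i ≠ j → i ≠ k → i ≠ l → j ≠ k → j ≠ l → k ≠ l →
      ⁅t i j, t k l⁆ = 0)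
    (hrel2 : ∀ i j k : Fin n, i ≠ j → i ≠ k → j ≠ k → ⁅t i j, t i k + t j k⁆ = 0)
    (z a b : Fin n → K) (hz : ∀ i j : Fin n, i ≠ j → z i ≠ z j) :
    ⁅∑ p ∈ univ.filter (fun p : Fin n × Fin n => p.1 < p.2),
        ((a p.1 - a p.2) / (z p.1 - z p.2)) • t p.1 p.2,
      ∑ p ∈ univ.filter (fun p : Fin n × Fin n => p.1 < p.2),
        ((b p.1 - b p.2) / (z p.1 - z p.2)) • t p.1 p.2⁆ = 0 := by
  classical
  have hzsub : ∀ i j : Fin n, i ≠ j → z i - z j ≠ 0 := fun i j h => sub_ne_zero.mpr (hz i j h)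
  set H : Fin n → L := fun i => ∑ j ∈ univ.erase i, (z i - z j)⁻¹ • t i j with hHdef
  -- The Gaudin Hamiltonians commute.
  have hHH : ∀ i j : Fin n, ⁅H i, H j⁆ = 0 := by
    intro i j
    rcases eq_or_ne i j with rfl | hij
    · exact lie_self _
    have expand : ⁅H i, H j⁆ =
        ∑ k ∈ univ.erase i, ∑ l ∈ univ.erase j,
          ((z i - z k)⁻¹ * (z j - z l)⁻¹) • ⁅t i k, t j l⁆ := by
      show ⁅∑ k ∈ univ.erase i, (z i - z k)⁻¹ • t i k,
            ∑ l ∈ univ.erase j, (z j - z l)⁻¹ • t j l⁆ = _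
      rw [my_sum_lie]
      refine Finset.sum_congr rfl fun k _ => ?_
      rw [my_lie_sum]
      refine Finset.sum_congr rfl fun l _ => ?_
      rw [smul_lie, lie_smul, smul_smul]
    rw [expand]
    set F : Fin n → Fin n → L :=
      fun k l => ((z i - z k)⁻¹ * (z j - z l)⁻¹) • ⁅t i k, t j l⁆ with hFdef
    have hjmem : j ∈ univ.erase i := mem_erase.mpr ⟨hij.symm, mem_univ j⟩
    rw [← Finset.add_sum_erase _ _ hjmem]
    -- the k = j inner sum: drop the l = i term (which is zero)
    have himem : i ∈ univ.erase j := mem_erase.mpr ⟨hij, mem_univ i⟩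
    have hk_j : ∑ l ∈ univ.erase j, F j l = ∑ l ∈ (univ.erase j).erase i, F j l := by
      rw [← Finset.add_sum_erase _ _ himem]
      have h0 : F j i = 0 := by
        show ((z i - z j)⁻¹ * (z j - z i)⁻¹) • ⁅t i j, t j i⁆ = 0
        rw [← hsymm i j, lie_self, smul_zero]
      rw [h0, zero_add]
    -- for k ∉ {i,j}: inner sum reduces to two terms
    have hk_other : ∀ k ∈ (univ.erase i).erase j,
        ∑ l ∈ univ.erase j, F k l = F k i + F k k := by
      intro k hk
      rcases mem_erase.mp hk with ⟨hkj, hk'⟩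
      rcases mem_erase.mp hk' with ⟨hki, -⟩
      have hsub : ({i, k} : Finset (Fin n)) ⊆ univ.erase j := by
        intro x hx
        rcases Finset.mem_insert.mp hx with rfl | hx
        · exact himem
        · rw [Finset.mem_singleton] at hx; subst hx
          exact mem_erase.mpr ⟨hkj, mem_univ _⟩
      rw [← Finset.sum_subset hsub]
      · rw [Finset.sum_insert (by simpa using hki.symm), Finset.sum_singleton]
      · intro l hl hl'
        rcases mem_erase.mp hl with ⟨hlj, -⟩
        simp only [Finset.mem_insert, Finset.mem_singleton, not_or] at hl'
        show ((z i - z k)⁻¹ * (z j - z l)⁻¹) • ⁅t i k, t j l⁆ = 0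
        rw [hrel1 i k j l hki.symm hij (fun h => hl'.1 h.symm) hkj
          (fun h => hl'.2 h.symm) (fun h => hlj h.symm), smul_zero]
    rw [hk_j, Finset.sum_congr rfl hk_other, Finset.erase_right_comm, ← Finset.sum_add_distrib]
    apply Finset.sum_eq_zero
    intro m hm
    rcases mem_erase.mp hm with ⟨hmj, hm'⟩
    rcases mem_erase.mp hm' with ⟨hmi, -⟩
    -- express all three brackets through C := ⁅t i j, t i m⁆
    have h1 : ⁅t i j, t j m⁆ = -⁅t i j, t i m⁆ := by
      have h := hrel2 i j m hij hmi.symm hmj.symm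
      rw [lie_add] at h
      exact eq_neg_of_add_eq_zero_right h
    have h2 : ⁅t i m, t j i⁆ = -⁅t i j, t i m⁆ := by
      rw [← hsymm i j]
      exact neg_eq_iff_eq_neg.mp (lie_skew (t i j) (t i m))
    have h3 : ⁅t i m, t j m⁆ = ⁅t i j, t i m⁆ := by
      have h := hrel2 i m j hmi.symm hij hmj
      rw [lie_add] at h
      have h' := eq_neg_of_add_eq_zero_right h
      rw [hsymm m j] at h'
      rw [h']
      exact lie_skew (t i j) (t i m)
    show F j m + (F m i + F m m) = 0
    show ((z i - z j)⁻¹ * (z j - z m)⁻¹) • ⁅t i j, t j m⁆ +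
        (((z i - z m)⁻¹ * (z j - z i)⁻¹) • ⁅t i m, t j i⁆ +
         ((z i - z m)⁻¹ * (z j - z m)⁻¹) • ⁅t i m, t j m⁆) = 0
    rw [h1, h2, h3, smul_neg, smul_neg, ← neg_smul, ← neg_smul, ← add_smul, ← add_smul]
    have hcoef : -((z i - z j)⁻¹ * (z j - z m)⁻¹) + (-((z i - z m)⁻¹ * (z j - z i)⁻¹) +
        (z i - z m)⁻¹ * (z j - z m)⁻¹) = 0 := by
      have h1 := hzsub i j hij
      have h2 := hzsub j m (fun h => hmj h.symm)
      have h3 := hzsub i m (fun h => hmi h.symm)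
      have h4 := hzsub j i hij.symm
      field_simp
      ring
    rw [hcoef, zero_smul]
  -- The given sums are linear combinations of the Hamiltonians.
  have key : ∀ c : Fin n → K,
      ∑ p ∈ univ.filter (fun p : Fin n × Fin n => p.1 < p.2),
        ((c p.1 - c p.2) / (z p.1 - z p.2)) • t p.1 p.2 = ∑ i, c i • H i := by
    intro c
    have step1 : ∑ i, c i • H i =
        ∑ p ∈ univ.filter (fun p : Fin n × Fin n => p.1 ≠ p.2),
          (c p.1 * (z p.1 - z p.2)⁻¹) • t p.1 p.2 := by
      rw [Finset.sum_finset_product (univ.filter (fun p : Fin n × Fin n => p.1 ≠ p.2))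
        univ (fun i => univ.erase i) (by simp [ne_comm, eq_comm])]
      simp only [hHdef, Finset.smul_sum, smul_smul]
    have split : ∑ p ∈ univ.filter (fun p : Fin n × Fin n => p.1 ≠ p.2),
          (c p.1 * (z p.1 - z p.2)⁻¹) • t p.1 p.2 =
        ∑ p ∈ univ.filter (fun p : Fin n × Fin n => p.1 < p.2),
          (c p.1 * (z p.1 - z p.2)⁻¹) • t p.1 p.2 +
        ∑ p ∈ univ.filter (fun p : Fin n × Fin n => p.2 < p.1),
          (c p.1 * (z p.1 - z p.2)⁻¹) • t p.1 p.2 := by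
      rw [← Finset.sum_filter_add_sum_filter_not
        (univ.filter (fun p : Fin n × Fin n => p.1 ≠ p.2))
        (fun p => p.1 < p.2)]
      congr 1
      · congr 1
        ext p
        simp only [Finset.mem_filter, Finset.mem_univ, true_and]
        constructor
        · exact fun h => h.2
        · exact fun h => ⟨ne_of_lt h, h⟩
      · congr 1
        ext p
        simp only [Finset.mem_filter, Finset.mem_univ, true_and, not_lt]
        constructor
        · exact fun h => lt_of_le_of_ne h.2 (Ne.symm h.1)
        · exact fun h => ⟨(ne_of_lt h).symm, le_of_lt h⟩
    have swap : ∑ p ∈ univ.filter (fun p : Fin n × Fin n => p.2 < p.1),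
          (c p.1 * (z p.1 - z p.2)⁻¹) • t p.1 p.2 =
        ∑ p ∈ univ.filter (fun p : Fin n × Fin n => p.1 < p.2),
          (c p.2 * (z p.2 - z p.1)⁻¹) • t p.2 p.1 := by
      apply Finset.sum_nbij' (fun p => Prod.swap p) (fun p => Prod.swap p)
      · intro p hp; simpa using (Finset.mem_filter.mp hp).2
      · intro p hp; simpa using (Finset.mem_filter.mp hp).2
      · intro p _; simp
      · intro p _; simp
      · intro p _; rfl
    rw [step1, split, swap, ← Finset.sum_add_distrib]
    apply Finset.sum_congr rfl
    intro p hp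
    have hlt : p.1 < p.2 := (Finset.mem_filter.mp hp).2
    have hne : p.1 ≠ p.2 := ne_of_lt hlt
    rw [← hsymm p.1 p.2, ← add_smul]
    congr 1
    have h1 := hzsub p.1 p.2 hne
    have h2 := hzsub p.2 p.1 hne.symm
    field_simp
    ring
  rw [key a, key b, my_sum_lie]
  apply Finset.sum_eq_zero
  intro i _
  rw [my_lie_sum]
  apply Finset.sum_eq_zero
  intro j _
  rw [smul_lie, lie_smul, hHH, smul_zero, smul_zero]
end

section
/- The Jucys–Murphy elements X_k = Σ_{i=1}^{k-1} (i k) (sum of transpositions), for k = 2, ..., n, pairwise commute in the group algebra of the symmetric group S_n. -/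
open Finset

lemma jm_swap_commute (K : Type*) [CommRing K] (n : ℕ) (i k l : Fin n)
    (hik : i < k) (hkl : k < l) :
    Commute (MonoidAlgebra.of K (Equiv.Perm (Fin n)) (Equiv.swap i k))
      (∑ j ∈ univ.filter (fun j => j < l),
        MonoidAlgebra.of K (Equiv.Perm (Fin n)) (Equiv.swap j l)) := by
  have hil : i < l := hik.trans hkl
  have hli : l ≠ i := hil.ne'
  have hlk : l ≠ k := hkl.ne'
  unfold Commute SemiconjBy
  rw [Finset.mul_sum, Finset.sum_mul]
  have key : ∀ j : Fin n, j < l →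
      MonoidAlgebra.of K (Equiv.Perm (Fin n)) (Equiv.swap j l) *
        MonoidAlgebra.of K (Equiv.Perm (Fin n)) (Equiv.swap i k) =
      MonoidAlgebra.of K (Equiv.Perm (Fin n)) (Equiv.swap i k) *
        MonoidAlgebra.of K (Equiv.Perm (Fin n)) (Equiv.swap (Equiv.swap i k j) l) := by
    intro j _
    rw [← map_mul, ← map_mul, Equiv.swap_mul_eq_mul_swap]
    congr 2 <;> simp [Equiv.swap_inv, Equiv.swap_apply_of_ne_of_ne hli hlk]
  rw [Finset.sum_congr rfl (fun j hj => key j (by simpa using hj))]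
  refine (Finset.sum_nbij' (fun j => Equiv.swap i k j) (fun j => Equiv.swap i k j)
    ?_ ?_ ?_ ?_ ?_).symm
  · intro j hj
    simp only [mem_filter, mem_univ, true_and] at hj ⊢
    rcases eq_or_ne j i with rfl | hji
    · rwa [Equiv.swap_apply_left]
    rcases eq_or_ne j k with rfl | hjk
    · rwa [Equiv.swap_apply_right]
    · rwa [Equiv.swap_apply_of_ne_of_ne hji hjk]
  · intro j hj
    simp only [mem_filter, mem_univ, true_and] at hj ⊢
    rcases eq_or_ne j i with rfl | hji
    · rwa [Equiv.swap_apply_left]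
    rcases eq_or_ne j k with rfl | hjk
    · rwa [Equiv.swap_apply_right]
    · rwa [Equiv.swap_apply_of_ne_of_ne hji hjk]
  · intro j _; simp
  · intro j _; simp
  · intro j _; rfl

/-- The Jucys–Murphy elements `X k = Σ_{i<k} (i k)` (sums of transpositions) pairwise
commute in the group algebra `K[S_n]` of the symmetric group. -/
theorem jucys_murphy_commute_group_algebra
    (K : Type*) [CommRing K] (n : ℕ)
    (X : Fin n → MonoidAlgebra K (Equiv.Perm (Fin n)))
    (hX : ∀ k, X k = ∑ i ∈ univ.filter (fun i => i < k),
      MonoidAlgebra.of K (Equiv.Perm (Fin n)) (Equiv.swap i k)) :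
    ∀ k l : Fin n, Commute (X k) (X l) := by
  have main : ∀ k l : Fin n, k < l → Commute (X k) (X l) := by
    intro k l hkl
    rw [hX k, hX l]
    refine Finset.sum_induction _ (fun x => Commute x _) (fun a b ha hb => ha.add_left hb)
      (Commute.zero_left _) ?_
    intro i hi
    simp only [mem_filter, mem_univ, true_and] at hi
    exact jm_swap_commute K n i k l hi hkl
  intro k l
  rcases lt_trichotomy k l with h | rfl | h
  · exact main k l h
  · exact Commute.refl _
  · exact (main l k h).symm
end

section
/- Let V be an abelian Lie subalgebra of the Kohno–Drinfeld Lie algebra t_n contained in the span of the generators t_{ij}. Then for any distinct i, j, k, the image p_{ijk}(V) under the linear map sending Σ a_{ij} t_{ij} to (a_{jk}, a_{ik}, a_{ij}) ∈ K^3 is at most two-dimensional. -/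
open Finset

set_option maxHeartbeats 1600000 in
lemma kd_coeff_zero {K : Type*} [Field K] {n : ℕ}
    {L : Type*} [LieRing L] [LieAlgebra K L]
    (t : Fin n → Fin n → L)
    (hsymm : ∀ i j, t i j = t j i)
    (hrel1 : ∀ i j k l : Fin n, i ≠ j → i ≠ k → i ≠ l → j ≠ k → j ≠ l → k ≠ l →
      ⁅t i j, t k l⁆ = 0)
    (hrel2 : ∀ i j k : Fin n, i ≠ j → i ≠ k → j ≠ k → ⁅t i j, t i k + t j k⁆ = 0)
    (hindbr : LinearIndependent K
      (fun q : {q : Fin n × Fin n × Fin n // q.1 < q.2.1 ∧ q.2.1 < q.2.2} =>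
        ⁅t q.1.1 q.1.2.1, t q.1.2.1 q.1.2.2⁆))
    (a b : Fin n → Fin n → K)
    (hab : ⁅∑ p ∈ univ.filter (fun p : Fin n × Fin n => p.1 < p.2), a p.1 p.2 • t p.1 p.2,
        ∑ p ∈ univ.filter (fun p : Fin n × Fin n => p.1 < p.2), b p.1 p.2 • t p.1 p.2⁆ = 0)
    (i j k : Fin n) (hij : i < j) (hjk : j < k) :
    a j k * b i k - a i k * b j k - a j k * b i j + a i j * b j k
      + a i k * b i j - a i j * b i k = 0 := by
  classical
  set F : Finset (Fin n × Fin n) := univ.filter (fun p : Fin n × Fin n => p.1 < p.2) with hF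
  have hik : i < k := hij.trans hjk
  -- Step 1: expand the bracket bilinearly
  have h1 : ∑ z ∈ F ×ˢ F,
      (a z.1.1 z.1.2 * b z.2.1 z.2.2) • ⁅t z.1.1 z.1.2, t z.2.1 z.2.2⁆ = 0 := by
    rw [Finset.sum_product' F F (fun x y => (a x.1 x.2 * b y.1 y.2) • ⁅t x.1 x.2, t y.1 y.2⁆)]
    have lie_sum' : ∀ (s : Finset (Fin n × Fin n)) (x : L) (g : Fin n × Fin n → L),
        ⁅x, ∑ p ∈ s, g p⁆ = ∑ p ∈ s, ⁅x, g p⁆ := by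
      intro s x g
      induction s using Finset.cons_induction with
      | empty => simp
      | cons p s hp ih => rw [Finset.sum_cons, Finset.sum_cons, lie_add, ih]
    have sum_lie' : ∀ (s : Finset (Fin n × Fin n)) (g : Fin n × Fin n → L) (x : L),
        ⁅∑ p ∈ s, g p, x⁆ = ∑ p ∈ s, ⁅g p, x⁆ := by
      intro s g x
      induction s using Finset.cons_induction with
      | empty => simp
      | cons p s hp ih => rw [Finset.sum_cons, Finset.sum_cons, add_lie, ih]
    have e : ⁅∑ p ∈ F, a p.1 p.2 • t p.1 p.2, ∑ p ∈ F, b p.1 p.2 • t p.1 p.2⁆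
        = ∑ p ∈ F, ∑ q ∈ F, (a p.1 p.2 * b q.1 q.2) • ⁅t p.1 p.2, t q.1 q.2⁆ := by
      rw [sum_lie']
      refine Finset.sum_congr rfl fun p _ => ?_
      rw [lie_sum']
      refine Finset.sum_congr rfl fun q _ => ?_
      rw [smul_lie, lie_smul, smul_smul]
    rw [← e]
    exact hab
  -- Step 2: dual functional
  obtain ⟨φ, hφ⟩ := LinearMap.exists_extend
    ((Finsupp.lapply (⟨(i, j, k), ⟨hij, hjk⟩⟩ :
        {q : Fin n × Fin n × Fin n // q.1 < q.2.1 ∧ q.2.1 < q.2.2}) :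
      ({q : Fin n × Fin n × Fin n // q.1 < q.2.1 ∧ q.2.1 < q.2.2} →₀ K) →ₗ[K] K).comp
      hindbr.repr)
  have hφX : ∀ u v w : Fin n, u < v → v < w →
      φ ⁅t u v, t v w⁆ = (if u = i ∧ v = j ∧ w = k then (1:K) else 0) := by
    intro u v w huv hvw
    have hmem : ⁅t u v, t v w⁆ ∈ Submodule.span K (Set.range
        (fun q : {q : Fin n × Fin n × Fin n // q.1 < q.2.1 ∧ q.2.1 < q.2.2} => ⁅t q.1.1 q.1.2.1, t q.1.2.1 q.1.2.2⁆)) :=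
      Submodule.subset_span ⟨⟨(u, v, w), ⟨huv, hvw⟩⟩, rfl⟩
    have h2 := LinearMap.congr_fun hφ ⟨⁅t u v, t v w⁆, hmem⟩
    simp only [LinearMap.comp_apply, Submodule.coe_subtype] at h2
    rw [h2, hindbr.repr_eq_single ⟨(u, v, w), ⟨huv, hvw⟩⟩ ⟨_, hmem⟩ rfl]
    simp only [Finsupp.lapply_apply, Finsupp.single_apply, Subtype.mk.injEq, Prod.mk.injEq]
  -- skew version
  have hφXr : ∀ u v w : Fin n, u < v → v < w →
      φ ⁅t v w, t u v⁆ = -(if u = i ∧ v = j ∧ w = k then (1:K) else 0) := by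
    intro u v w huv hvw
    rw [← lie_skew, map_neg, hφX u v w huv hvw]
  -- the rest of the multiplication table
  have tab1 : ∀ u v w : Fin n, u < v → v < w →
      φ ⁅t u v, t u w⁆ = -(if u = i ∧ v = j ∧ w = k then (1:K) else 0) := by
    intro u v w huv hvw
    have r1 := hrel2 u v w huv.ne (huv.trans hvw).ne hvw.ne
    rw [lie_add] at r1
    rw [eq_neg_of_add_eq_zero_left r1, map_neg, hφX u v w huv hvw]
  have tab1r : ∀ u v w : Fin n, u < v → v < w →
      φ ⁅t u w, t u v⁆ = (if u = i ∧ v = j ∧ w = k then (1:K) else 0) := by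
    intro u v w huv hvw
    rw [← lie_skew, map_neg, tab1 u v w huv hvw, neg_neg]
  have tab2 : ∀ u v w : Fin n, u < v → v < w →
      φ ⁅t u w, t v w⁆ = -(if u = i ∧ v = j ∧ w = k then (1:K) else 0) := by
    intro u v w huv hvw
    have r2 := hrel2 u w v (huv.trans hvw).ne huv.ne hvw.ne'
    rw [hsymm w v, lie_add] at r2
    rw [eq_neg_of_add_eq_zero_right r2, map_neg, tab1r u v w huv hvw]
  have tab2r : ∀ u v w : Fin n, u < v → v < w →
      φ ⁅t v w, t u w⁆ = (if u = i ∧ v = j ∧ w = k then (1:K) else 0) := by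
    intro u v w huv hvw
    rw [← lie_skew, map_neg, tab2 u v w huv hvw, neg_neg]
  -- master computation of φ on all products of generators
  have master : ∀ z : (Fin n × Fin n) × (Fin n × Fin n), z.1.1 < z.1.2 → z.2.1 < z.2.2 →
      φ ⁅t z.1.1 z.1.2, t z.2.1 z.2.2⁆ =
        (if z = ((i,j),(j,k)) then (1:K) else 0) - (if z = ((i,j),(i,k)) then 1 else 0)
        + (if z = ((i,k),(i,j)) then 1 else 0) - (if z = ((i,k),(j,k)) then 1 else 0)
        - (if z = ((j,k),(i,j)) then 1 else 0) + (if z = ((j,k),(i,k)) then 1 else 0) := by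
    rintro ⟨⟨p, q⟩, r, s⟩ hpq hrs
    dsimp only at hpq hrs
    simp only [Prod.mk.injEq]
    by_cases hqr : q = r
    · subst hqr
      rw [hφX p q s hpq hrs]
      split_ifs <;> first | omega | norm_num
    · by_cases hps : p = s
      · subst hps
        rw [hφXr r p q hrs hpq]
        split_ifs <;> first | omega | norm_num
      · by_cases hpr : p = r
        · subst hpr
          rcases lt_trichotomy q s with h | h | h
          · rw [tab1 p q s hpq h]
            split_ifs <;> first | omega | norm_num
          · subst h
            rw [lie_self, map_zero]
            split_ifs <;> first | omega | norm_num
          · rw [tab1r p s q hrs h]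
            split_ifs <;> first | omega | norm_num
        · by_cases hqs : q = s
          · subst hqs
            rcases lt_trichotomy p r with h | h | h
            · rw [tab2 p r q h hrs]
              split_ifs <;> first | omega | norm_num
            · exact absurd h hpr
            · rw [tab2r r p q h hpq]
              split_ifs <;> first | omega | norm_num
          · rw [hrel1 p q r s hpq.ne hpr hps hqr hqs hrs.ne, map_zero]
            split_ifs <;> first | omega | norm_num
  -- apply φ to the expanded bracket
  have h2 : ∑ z ∈ F ×ˢ F,
      a z.1.1 z.1.2 * b z.2.1 z.2.2 * φ ⁅t z.1.1 z.1.2, t z.2.1 z.2.2⁆ = 0 := by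
    have h3 := congrArg φ h1
    simpa only [map_sum, map_smul, smul_eq_mul, map_zero] using h3
  have hr : ∑ z ∈ F ×ˢ F, a z.1.1 z.1.2 * b z.2.1 z.2.2 * φ ⁅t z.1.1 z.1.2, t z.2.1 z.2.2⁆
      = ∑ z ∈ F ×ˢ F, a z.1.1 z.1.2 * b z.2.1 z.2.2 *
        ((((((if z = ((i,j),(j,k)) then (1:K) else 0) - if z = ((i,j),(i,k)) then 1 else 0)
        + if z = ((i,k),(i,j)) then 1 else 0) - if z = ((i,k),(j,k)) then 1 else 0)
        - if z = ((j,k),(i,j)) then 1 else 0) + if z = ((j,k),(i,k)) then 1 else 0) := by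
    refine Finset.sum_congr rfl fun z hz => ?_
    rw [Finset.mem_product, hF, Finset.mem_filter, Finset.mem_filter] at hz
    rw [master z hz.1.2 hz.2.2]
  rw [hr] at h2
  simp only [mul_sub, mul_add, Finset.sum_sub_distrib, Finset.sum_add_distrib,
    mul_ite, mul_one, mul_zero, Finset.sum_ite_eq', Finset.mem_product, hF,
    Finset.mem_filter, Finset.mem_univ, true_and, hij, hjk, hik, and_self, if_true] at h2
  linear_combination h2

/-- Let `V` be an abelian Lie subalgebra of the Kohno–Drinfeld Lie algebra `t_n` contained
in the span of the generators.  Using the linear independence of the generators, `V` is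
identified with a subspace `C` of symmetric coefficient functions `a` (with
`a i j = a j i`), whose associated elements `Σ_{i<j} a i j • t i j` pairwise commute.
Then for any distinct `i, j, k` the image `p_{ijk}(V)`, where
`p_{ijk}(a) = (a j k, a i k, a i j) ∈ K³`, is at most two-dimensional. -/
theorem abelian_subalgebra_projection_dim_le_two
    (K : Type*) [Field K] (n : ℕ)
    (L : Type*) [LieRing L] [LieAlgebra K L]
    (t : Fin n → Fin n → L)
    (hsymm : ∀ i j, t i j = t j i)
    (hrel1 : ∀ i j k l : Fin n, i ≠ j → i ≠ k → i ≠ l → j ≠ k → j ≠ l → k ≠ l →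
      ⁅t i j, t k l⁆ = 0)
    (hrel2 : ∀ i j k : Fin n, i ≠ j → i ≠ k → j ≠ k → ⁅t i j, t i k + t j k⁆ = 0)
    (hindgen : LinearIndependent K
      (fun p : {p : Fin n × Fin n // p.1 < p.2} => t p.1.1 p.1.2))
    (hindbr : LinearIndependent K
      (fun q : {q : Fin n × Fin n × Fin n // q.1 < q.2.1 ∧ q.2.1 < q.2.2} =>
        ⁅t q.1.1 q.1.2.1, t q.1.2.1 q.1.2.2⁆))
    (C : Submodule K (Fin n → Fin n → K))
    (hCsymm : ∀ a ∈ C, ∀ i j : Fin n, a i j = a j i)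
    (hCab : ∀ a ∈ C, ∀ b ∈ C,
      ⁅∑ p ∈ univ.filter (fun p : Fin n × Fin n => p.1 < p.2), a p.1 p.2 • t p.1 p.2,
        ∑ p ∈ univ.filter (fun p : Fin n × Fin n => p.1 < p.2), b p.1 p.2 • t p.1 p.2⁆
        = 0) :
    ∀ i j k : Fin n, i ≠ j → i ≠ k → j ≠ k →
      Module.finrank K
        (Submodule.span K {v : Fin 3 → K | ∃ a ∈ C, v = ![a j k, a i k, a i j]}) ≤ 2 := by
  intro i j k hij hik hjk
  have key : ∀ a ∈ C, ∀ b ∈ C,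
      a j k * b i k - a i k * b j k - a j k * b i j + a i j * b j k
        + a i k * b i j - a i j * b i k = 0 := by
    intro a ha b hb
    have hab := hCab a ha b hb
    have kd := kd_coeff_zero t hsymm hrel1 hrel2 hindbr a b hab
    have sa := hCsymm a ha
    have sb := hCsymm b hb
    rcases lt_trichotomy i j with h1 | h1 | h1
    · rcases lt_trichotomy j k with h2 | h2 | h2
      · linear_combination kd i j k h1 h2
      · exact absurd h2 hjk
      · rcases lt_trichotomy i k with h3 | h3 | h3
        · -- i < k < j
          have h := kd i k j h3 h2
          rw [sa k j, sb k j] at h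
          linear_combination -h
        · exact absurd h3 hik
        · -- k < i < j
          have h := kd k i j h3 h1
          rw [sa k j, sb k j, sa k i, sb k i] at h
          linear_combination h
    · exact absurd h1 hij
    · rcases lt_trichotomy i k with h2 | h2 | h2
      · -- j < i < k
        have h := kd j i k h1 h2
        rw [sa j i, sb j i] at h
        linear_combination -h
      · exact absurd h2 hik
      · rcases lt_trichotomy j k with h3 | h3 | h3
        · -- j < k < i
          have h := kd j k i h3 h2
          rw [sa j i, sb j i, sa k i, sb k i] at h
          linear_combination h
        · exact absurd h3 hjk
        · -- k < j < i
          have h := kd k j i h3 h1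
          rw [sa k j, sb k j, sa k i, sb k i, sa j i, sb j i] at h
          linear_combination -h
  classical
  set S : Set (Fin 3 → K) := {v : Fin 3 → K | ∃ a ∈ C, v = ![a j k, a i k, a i j]} with hS
  let B : (Fin 3 → K) →ₗ[K] (Fin 3 → K) →ₗ[K] K := LinearMap.mk₂ K
    (fun v w => v 0 * w 1 - v 1 * w 0 - v 0 * w 2 + v 2 * w 0 + v 1 * w 2 - v 2 * w 1)
    (by intros; simp only [Pi.add_apply]; ring)
    (by intros; simp only [Pi.smul_apply, smul_eq_mul]; ring)
    (by intros; simp only [Pi.add_apply]; ring)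
    (by intros; simp only [Pi.smul_apply, smul_eq_mul]; ring)
  have hSB : ∀ v ∈ S, ∀ w ∈ S, B v w = 0 := by
    rintro v ⟨a, ha, rfl⟩ w ⟨b, hb, rfl⟩
    have h := key a ha b hb
    simp only [B, LinearMap.mk₂_apply, Matrix.cons_val_zero, Matrix.cons_val_one,
      Matrix.head_cons, Matrix.cons_val_two, Matrix.tail_cons]
    linear_combination h
  have hWB : ∀ v ∈ Submodule.span K S, ∀ w ∈ Submodule.span K S, B v w = 0 := by
    intro v hv w hw
    have step1 : ∀ u ∈ S, B u w = 0 := by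
      intro u hu
      have hle : Submodule.span K S ≤ LinearMap.ker (B u) := by
        rw [Submodule.span_le]
        intro x hx
        exact LinearMap.mem_ker.mpr (hSB u hu x hx)
      exact LinearMap.mem_ker.mp (hle hw)
    have hle : Submodule.span K S ≤ LinearMap.ker (B.flip w) := by
      rw [Submodule.span_le]
      intro x hx
      simpa using step1 x hx
    simpa using LinearMap.mem_ker.mp (hle hv)
  by_contra hcon
  push_neg at hcon
  have htop : Submodule.span K S = ⊤ := by
    apply Submodule.eq_top_of_finrank_eq
    have hle3 : Module.finrank K (Submodule.span K S) ≤ 3 := by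
      have h := Submodule.finrank_le (Submodule.span K S)
      rwa [Module.finrank_fintype_fun_eq_card, Fintype.card_fin] at h
    rw [Module.finrank_fintype_fun_eq_card, Fintype.card_fin]
    omega
  have h1 : (![1,0,0] : Fin 3 → K) ∈ Submodule.span K S := htop ▸ Submodule.mem_top
  have h2 : (![0,1,0] : Fin 3 → K) ∈ Submodule.span K S := htop ▸ Submodule.mem_top
  have h3 := hWB _ h1 _ h2
  simp only [B, LinearMap.mk₂_apply, Matrix.cons_val_zero, Matrix.cons_val_one,
    Matrix.head_cons, Matrix.cons_val_two, Matrix.tail_cons] at h3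
  norm_num at h3
end

section
/- Any abelian Lie subalgebra of the Kohno–Drinfeld Lie algebra t_n contained in the span of the generators t_{ij} has dimension at most n - 1. -/
/-!
Write `x ∈ W` as `∑ x_ab t_ab`. For `i < j < k`, the only brackets of generators with a component
along the basis vector `[t_ij, t_jk]` are those among `t_ij, t_ik, t_jk`, so that component of
`[x, y]` is `(x_ik - x_jk) (y_ij - y_ik) - (x_ij - x_ik) (y_ik - y_jk)`. As `W` is abelian it
vanishes, i.e. the coordinate functionals `φ_ij, φ_ik, φ_jk ∈ W*` are collinear. Adding the
vertices one at a time: once some new point `φ_{i₀ m}` leaves the old span, every other `φ_{i m}`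
lies on the line through it and the old point `φ_{i i₀}`, so each vertex raises the dimension of
the span of the `φ_ab` by at most one. Since the `φ_ab` separate the points of `W`, they span `W*`.
-/

open Module Submodule

section LinearAlgebra

variable {K V M : Type*} [Field K] [AddCommGroup V] [Module K V] [AddCommGroup M] [Module K M]

theorem Module.Dual.eq_zero_or_exists_eq_smul_of_mul_eq_mul {u v : Dual K V}
    (h : ∀ x y, u x * v y = v x * u y) : u = 0 ∨ ∃ c : K, v = c • u := by
  by_contra! hne
  obtain ⟨hu, hv⟩ := hne
  obtain ⟨x₀, hx₀⟩ : ∃ x₀, u x₀ ≠ 0 := by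
    by_contra! h0; exact hu (LinearMap.ext h0)
  refine hv (v x₀ / u x₀) (LinearMap.ext fun y => ?_)
  simp only [LinearMap.smul_apply, smul_eq_mul]
  field_simp
  linear_combination h x₀ y

theorem collinear_of_sub_mul_sub_eq {f₁ f₂ f₃ : Dual K V}
    (h : ∀ x y, (f₁ x - f₂ x) * (f₂ y - f₃ y) = (f₂ x - f₃ x) * (f₁ y - f₂ y)) :
    Collinear K {f₁, f₂, f₃} := by
  rcases Module.Dual.eq_zero_or_exists_eq_smul_of_mul_eq_mul (u := f₁ - f₂) (v := f₂ - f₃)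
    (by simpa using h) with h₁₂ | ⟨c, hc⟩
  · rw [sub_eq_zero.1 h₁₂, Set.insert_eq_of_mem (Set.mem_insert _ _)]
    exact collinear_pair K f₂ f₃
  · rw [collinear_iff_of_mem (Set.mem_insert_of_mem _ (Set.mem_insert _ _))]
    refine ⟨f₁ - f₂, ?_⟩
    rintro f (rfl | rfl | rfl)
    · exact ⟨1, by simp⟩
    · exact ⟨0, by simp⟩
    · exact ⟨-c, by rw [neg_smul, ← hc]; simp⟩

theorem Collinear.mem_sup_span_singleton {s : Set M} (hs : Collinear K s) {a z w : M}
    (ha : a ∈ s) (hz : z ∈ s) (hw : w ∈ s) {A : Submodule K M} (haA : a ∈ A) (hzA : z ∉ A) :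
    w ∈ A ⊔ (K ∙ z) := by
  have hline := hs.mem_affineSpan_of_mem_of_ne ha hz hw (by rintro rfl; exact hzA haA)
  refine span_le.2 ?_ (affineSpan_subset_span hline)
  rintro _ (rfl | rfl)
  · exact mem_sup_left haA
  · exact mem_sup_right (mem_span_singleton_self _)

theorem LinearIndependent.exists_dual_apply_eq_one {ι : Type*} [DecidableEq ι] {v : ι → V}
    (hv : LinearIndependent K v) (i : ι) :
    ∃ f : Dual K V, f (v i) = 1 ∧ ∀ j ≠ i, f (v j) = 0 := by
  obtain ⟨f, hf⟩ := LinearMap.exists_extend ((Basis.span hv).coord i)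
  have hfv : ∀ j, f (v j) = (Basis.span hv).coord i (Basis.span hv j) := fun j => by
    rw [← hf]; simp [Basis.span_apply]
  refine ⟨f, by simp [hfv], fun j hj => by simp [hfv, hj]⟩

theorem span_pairs_le_of_castSucc {R : Type*} [Semiring R] [Module R M] {n : ℕ}
    (Q : Fin (n + 1) → Fin (n + 1) → M) {V : Submodule R M}
    (hV : span R {x | ∃ i j : Fin n, i < j ∧ Q i.castSucc j.castSucc = x} ≤ V)
    (hlast : ∀ i : Fin n, Q i.castSucc (Fin.last n) ∈ V) :
    span R {x | ∃ i j, i < j ∧ Q i j = x} ≤ V := by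
  rw [span_le]
  rintro _ ⟨i, j, hij, rfl⟩
  obtain ⟨i, rfl⟩ := Fin.exists_castSucc_eq.2 (hij.trans_le (Fin.le_last j)).ne
  induction j using Fin.lastCases with
  | last => exact hlast i
  | cast j => exact hV (subset_span ⟨i, j, Fin.castSucc_lt_castSucc_iff.1 hij, rfl⟩)

theorem finrank_span_le_of_collinear : ∀ (n : ℕ) (Q : Fin n → Fin n → M),
    (∀ i j k, i < j → j < k → Collinear K {Q i j, Q i k, Q j k}) →
    finrank K (span K {x | ∃ i j, i < j ∧ Q i j = x}) ≤ n - 1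
  | 0, Q, _ => by
    rw [show {x | ∃ i j : Fin 0, i < j ∧ Q i j = x} = ∅ from
      Set.eq_empty_of_forall_notMem fun _ ⟨i, _⟩ => i.elim0, span_empty, finrank_bot]
  | n + 1, Q, hQ => by
    set A := span K {x | ∃ i j : Fin n, i < j ∧ Q i.castSucc j.castSucc = x}
    have hA : finrank K A ≤ n - 1 := finrank_span_le_of_collinear n _
      fun i j k hij hjk => hQ _ _ _ (Fin.castSucc_lt_castSucc_iff.2 hij)
        (Fin.castSucc_lt_castSucc_iff.2 hjk)
    have : FiniteDimensional K A := FiniteDimensional.span_of_finite K <|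
      (Set.finite_range fun p : Fin n × Fin n => Q p.1.castSucc p.2.castSucc).subset
        (by rintro _ ⟨i, j, -, rfl⟩; exact ⟨(i, j), rfl⟩)
    by_cases hall : ∀ i : Fin n, Q i.castSucc (Fin.last n) ∈ A
    · calc _ ≤ finrank K A := finrank_mono (span_pairs_le_of_castSucc Q le_rfl hall)
        _ ≤ n + 1 - 1 := by omega
    push Not at hall
    obtain ⟨i₀, hi₀⟩ := hall
    set z := Q i₀.castSucc (Fin.last n)
    -- the triangle on `i`, `i₀` and the new vertex is a line through `z ∉ A` and a point of `A`
    have hnew : ∀ i : Fin n, Q i.castSucc (Fin.last n) ∈ A ⊔ (K ∙ z) := by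
      intro i
      rcases lt_trichotomy i i₀ with h | rfl | h
      · have hT := hQ _ _ _ (Fin.castSucc_lt_castSucc_iff.2 h) (Fin.castSucc_lt_last i₀)
        exact hT.mem_sup_span_singleton (by simp) (by simp [z]) (by simp)
          (subset_span ⟨i, i₀, h, rfl⟩) hi₀
      · exact mem_sup_right (mem_span_singleton_self _)
      · have hT := hQ _ _ _ (Fin.castSucc_lt_castSucc_iff.2 h) (Fin.castSucc_lt_last i)
        exact hT.mem_sup_span_singleton (by simp) (by simp [z]) (by simp)
          (subset_span ⟨i₀, i, h, rfl⟩) hi₀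
    calc _ ≤ finrank K (A ⊔ (K ∙ z) : Submodule K M) :=
          finrank_mono (span_pairs_le_of_castSucc Q le_sup_left hnew)
      _ ≤ finrank K A + finrank K (K ∙ z) :=
        finrank_add_le_finrank_add_finrank _ _
      _ ≤ n - 1 + 1 := add_le_add hA (by simpa using finrank_span_le_card ({_} : Set M))
      _ = n + 1 - 1 := by have := i₀.pos; omega

end LinearAlgebra

namespace KohnoDrinfeld

variable {n : ℕ}

abbrev Edge (n : ℕ) := {p : Fin n × Fin n // p.1 < p.2}

abbrev Triangle (n : ℕ) := {q : Fin n × Fin n × Fin n // q.1 < q.2.1 ∧ q.2.1 < q.2.2}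

namespace Triangle

def ij (T : Triangle n) : Edge n := ⟨(T.1.1, T.1.2.1), T.2.1⟩

def ik (T : Triangle n) : Edge n := ⟨(T.1.1, T.1.2.2), T.2.1.trans T.2.2⟩

def jk (T : Triangle n) : Edge n := ⟨(T.1.2.1, T.1.2.2), T.2.2⟩

def HasEdge (T : Triangle n) (p : Edge n) : Prop := p = T.ij ∨ p = T.ik ∨ p = T.jk

theorem ij_ne_ik (T : Triangle n) : T.ij ≠ T.ik := fun h => T.2.2.ne (congrArg (·.1.2) h)

theorem ij_ne_jk (T : Triangle n) : T.ij ≠ T.jk := fun h => T.2.1.ne (congrArg (·.1.1) h)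

theorem ik_ne_jk (T : Triangle n) : T.ik ≠ T.jk := fun h => T.2.1.ne (congrArg (·.1.1) h)

end Triangle

variable {L : Type*} [LieRing L]

def edgeGen (t : Fin n → Fin n → L) (p : Edge n) : L := t p.1.1 p.1.2

def triangleBracket (t : Fin n → Fin n → L) (T : Triangle n) : L :=
  ⁅t T.1.1 T.1.2.1, t T.1.2.1 T.1.2.2⁆

structure Relations (t : Fin n → Fin n → L) : Prop where
  symm : ∀ i j, t i j = t j i
  lie_eq_zero : ∀ i j k l : Fin n, i ≠ j → i ≠ k → i ≠ l → j ≠ k → j ≠ l → k ≠ l →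
    ⁅t i j, t k l⁆ = 0
  lie_add_eq_zero : ∀ i j k : Fin n, i ≠ j → i ≠ k → j ≠ k → ⁅t i j, t i k + t j k⁆ = 0

namespace Relations

variable {t : Fin n → Fin n → L}

theorem lie_ij_ik (ht : Relations t) {i j k : Fin n} (hij : i ≠ j) (hik : i ≠ k) (hjk : j ≠ k) :
    ⁅t i j, t i k⁆ = -⁅t i j, t j k⁆ :=
  eq_neg_of_add_eq_zero_left (by rw [← lie_add]; exact ht.lie_add_eq_zero i j k hij hik hjk)

theorem lie_ik_jk (ht : Relations t) {i j k : Fin n} (hij : i ≠ j) (hik : i ≠ k) (hjk : j ≠ k) :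
    ⁅t i k, t j k⁆ = -⁅t i j, t j k⁆ := by
  have h := ht.lie_ij_ik hik.symm hjk.symm hij
  rw [← ht.symm i k, ← ht.symm j k] at h
  rw [h, ← lie_skew, ht.lie_ij_ik hij hik hjk, neg_neg]

theorem lie_edgeGen_ij_ik (ht : Relations t) (T : Triangle n) :
    ⁅edgeGen t T.ij, edgeGen t T.ik⁆ = -triangleBracket t T :=
  ht.lie_ij_ik T.2.1.ne (T.2.1.trans T.2.2).ne T.2.2.ne

theorem lie_edgeGen_ik_jk (ht : Relations t) (T : Triangle n) :
    ⁅edgeGen t T.ik, edgeGen t T.jk⁆ = -triangleBracket t T :=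
  ht.lie_ik_jk T.2.1.ne (T.2.1.trans T.2.2).ne T.2.2.ne

section CommRing

variable {K : Type*} [CommRing K] [LieAlgebra K L]

theorem lie_edgeGen_eq_zero_or_mem_span (ht : Relations t) (p q : Edge n) :
    ⁅edgeGen t p, edgeGen t q⁆ = 0 ∨
      ∃ T : Triangle n, T.HasEdge p ∧ ⁅edgeGen t p, edgeGen t q⁆ ∈ K ∙ triangleBracket t T := by
  obtain ⟨⟨a, b⟩, hab⟩ := p
  obtain ⟨⟨c, d⟩, hcd⟩ := q
  have mem : ∀ {x : L} (T : Triangle n), (x = triangleBracket t T ∨ x = -triangleBracket t T) →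
      x ∈ K ∙ triangleBracket t T := by
    rintro x T (rfl | rfl)
    exacts [mem_span_singleton_self _, neg_mem (mem_span_singleton_self _)]
  simp only [edgeGen]
  rcases eq_or_ne a c with rfl | hac
  · rcases lt_trichotomy b d with hbd | rfl | hbd
    · exact .inr ⟨⟨(a, b, d), hab, hbd⟩, .inl rfl,
        mem _ (.inr (ht.lie_ij_ik hab.ne (hab.trans hbd).ne hbd.ne))⟩
    · exact .inl (lie_self _)
    · refine .inr ⟨⟨(a, d, b), hcd, hbd⟩, .inr (.inl rfl), mem _ (.inl ?_)⟩
      rw [← lie_skew, ht.lie_ij_ik hcd.ne hab.ne hbd.ne, neg_neg]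
      rfl
  rcases eq_or_ne b c with rfl | hbc
  · exact .inr ⟨⟨(a, b, d), hab, hcd⟩, .inl rfl, mem _ (.inl rfl)⟩
  rcases eq_or_ne a d with rfl | had
  · exact .inr ⟨⟨(c, a, b), hcd, hab⟩, .inr (.inr rfl), mem _ (.inr (lie_skew _ _).symm)⟩
  rcases eq_or_ne b d with rfl | hbd
  · rcases lt_or_gt_of_ne hac with hac | hca
    · exact .inr ⟨⟨(a, c, b), hac, hcd⟩, .inr (.inl rfl),
        mem _ (.inr (ht.lie_ik_jk hac.ne hab.ne hcd.ne))⟩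
    · refine .inr ⟨⟨(c, a, b), hca, hab⟩, .inr (.inr rfl), mem _ (.inl ?_)⟩
      rw [← lie_skew, ht.lie_ik_jk hca.ne hcd.ne hab.ne, neg_neg]
      rfl
  exact .inl (ht.lie_eq_zero a b c d hab.ne hac had hbc hbd hcd.ne)

theorem apply_lie_edgeGen_eq_zero (ht : Relations t) {T : Triangle n} {ξ : L →ₗ[K] K}
    (hξ : ∀ S ≠ T, ξ (triangleBracket t S) = 0) {p : Edge n} (hp : ¬T.HasEdge p) (q : Edge n) :
    ξ ⁅edgeGen t p, edgeGen t q⁆ = 0 := by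
  rcases ht.lie_edgeGen_eq_zero_or_mem_span (K := K) p q with h | ⟨S, hS, hmem⟩
  · rw [h, map_zero]
  · obtain ⟨c, hc⟩ := mem_span_singleton.1 hmem
    rw [← hc, map_smul, hξ S (by rintro rfl; exact hp hS), smul_zero]

theorem apply_lie_eq (ht : Relations t) {G : Submodule K L} (B : Basis (Edge n) K G)
    (hB : ∀ p, (B p : L) = edgeGen t p) {T : Triangle n} {ξ : L →ₗ[K] K}
    (hξT : ξ (triangleBracket t T) = 1) (hξ : ∀ S ≠ T, ξ (triangleBracket t S) = 0) (x y : G) :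
    ξ ⁅(x : L), (y : L)⁆ =
      (B.coord T.ik x - B.coord T.jk x) * (B.coord T.ij y - B.coord T.ik y) -
        (B.coord T.ij x - B.coord T.ik x) * (B.coord T.ik y - B.coord T.jk y) := by
  let u := B.coord T.ij - B.coord T.ik
  let v := B.coord T.ik - B.coord T.jk
  let bracket : G →ₗ[K] G →ₗ[K] K :=
    ((LieModule.toEnd K L L : L →ₗ[K] Module.End K L).compl₁₂ G.subtype G.subtype).compr₂ ξ
  suffices bracket = (LinearMap.mul K K).compl₁₂ v u - (LinearMap.mul K K).compl₁₂ u v from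
    congrArg (fun β : G →ₗ[K] G →ₗ[K] K => β x y) this
  refine LinearMap.ext_basis B B fun p q => ?_
  simp only [bracket, u, v, LinearMap.compr₂_apply, LinearMap.compl₁₂_apply, LinearMap.sub_apply,
    LinearMap.mul_apply', Submodule.subtype_apply, hB, LieHom.coe_toLinearMap,
    LieModule.toEnd_apply_apply, Basis.coord_apply, Basis.repr_self, Finsupp.single_apply]
  by_cases hp : T.HasEdge p
  · by_cases hq : T.HasEdge q
    · have h₁₂ := ht.lie_edgeGen_ij_ik T
      have h₂₃ := ht.lie_edgeGen_ik_jk T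
      have h₁₃ : ⁅edgeGen t T.ij, edgeGen t T.jk⁆ = triangleBracket t T := rfl
      have h₂₁ : ⁅edgeGen t T.ik, edgeGen t T.ij⁆ = triangleBracket t T := by
        rw [← lie_skew, h₁₂, neg_neg]
      have h₃₂ : ⁅edgeGen t T.jk, edgeGen t T.ik⁆ = triangleBracket t T := by
        rw [← lie_skew, h₂₃, neg_neg]
      have h₃₁ : ⁅edgeGen t T.jk, edgeGen t T.ij⁆ = -triangleBracket t T := by
        rw [← lie_skew, h₁₃]
      rcases hp with rfl | rfl | rfl <;> rcases hq with rfl | rfl | rfl <;>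
        simp [h₁₂, h₂₃, h₁₃, h₂₁, h₃₂, h₃₁, hξT, T.ij_ne_ik, T.ij_ne_jk, T.ik_ne_jk,
          T.ij_ne_ik.symm, T.ij_ne_jk.symm, T.ik_ne_jk.symm]
    · rw [← lie_skew, map_neg, ht.apply_lie_edgeGen_eq_zero hξ hq p]
      simp only [Triangle.HasEdge, not_or] at hq
      simp [hq.1, hq.2.1, hq.2.2]
  · rw [ht.apply_lie_edgeGen_eq_zero hξ hp q]
    simp only [Triangle.HasEdge, not_or] at hp
    simp [hp.1, hp.2.1, hp.2.2]

end CommRing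

theorem collinear_coord {K : Type*} [Field K] [LieAlgebra K L] (ht : Relations t)
    (hindbr : LinearIndependent K (triangleBracket t)) {G : Submodule K L}
    (B : Basis (Edge n) K G) (hB : ∀ p, (B p : L) = edgeGen t p) {V : Submodule K L}
    (hVG : V ≤ G) (hV : ∀ x ∈ V, ∀ y ∈ V, ⁅x, y⁆ = 0) (T : Triangle n) :
    Collinear K {(B.coord T.ij).comp (inclusion hVG), (B.coord T.ik).comp (inclusion hVG),
      (B.coord T.jk).comp (inclusion hVG)} := by
  classical
  obtain ⟨ξ, hξT, hξ⟩ := hindbr.exists_dual_apply_eq_one T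
  refine collinear_of_sub_mul_sub_eq fun x y => ?_
  have h := ht.apply_lie_eq B hB hξT hξ (inclusion hVG x) (inclusion hVG y)
  rw [coe_inclusion, coe_inclusion, hV x x.2 y y.2, map_zero] at h
  simp only [LinearMap.comp_apply]
  linear_combination h

end Relations

end KohnoDrinfeld

open KohnoDrinfeld

/-- Any abelian Lie subalgebra of the Kohno–Drinfeld Lie algebra `t_n` contained in the
span of the generators `t i j` has dimension at most `n - 1`.  Here `t_n` is formalized
as any Lie algebra with symmetric generators satisfying the Kohno–Drinfeld relations such
that the generators `t i j` (`i<j`) and the brackets `[t i j, t j k]` (`i<j<k`) are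
linearly independent. -/
theorem abelian_subalgebra_dim_le
    (K : Type*) [Field K] (n : ℕ)
    (L : Type*) [LieRing L] [LieAlgebra K L]
    (t : Fin n → Fin n → L)
    (hsymm : ∀ i j, t i j = t j i)
    (hrel1 : ∀ i j k l : Fin n, i ≠ j → i ≠ k → i ≠ l → j ≠ k → j ≠ l → k ≠ l →
      ⁅t i j, t k l⁆ = 0)
    (hrel2 : ∀ i j k : Fin n, i ≠ j → i ≠ k → j ≠ k → ⁅t i j, t i k + t j k⁆ = 0)
    (hindgen : LinearIndependent K
      (fun p : {p : Fin n × Fin n // p.1 < p.2} => t p.1.1 p.1.2))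
    (hindbr : LinearIndependent K
      (fun q : {q : Fin n × Fin n × Fin n // q.1 < q.2.1 ∧ q.2.1 < q.2.2} =>
        ⁅t q.1.1 q.1.2.1, t q.1.2.1 q.1.2.2⁆))
    (W : LieSubalgebra K L)
    (hab : ∀ x ∈ W, ∀ y ∈ W, ⁅x, y⁆ = (0 : L))
    (hspan : (W : Submodule K L) ≤
      Submodule.span K {x : L | ∃ i j : Fin n, i < j ∧ x = t i j}) :
    Module.finrank K W ≤ n - 1 := by
  classical
  have ht : Relations t := ⟨hsymm, hrel1, hrel2⟩
  let B : Basis (Edge n) K (span K (Set.range (edgeGen t))) := Basis.span hindgen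
  have hB : ∀ p, (B p : L) = edgeGen t p := fun p =>
    congrArg Subtype.val (Basis.span_apply hindgen p)
  have hWG : W.toSubmodule ≤ span K (Set.range (edgeGen t)) :=
    hspan.trans (span_mono (by rintro _ ⟨i, j, hij, rfl⟩; exact ⟨⟨(i, j), hij⟩, rfl⟩))
  have := Module.Finite.of_basis B
  have := Submodule.finiteDimensional_of_le hWG
  let φ : Fin n → Fin n → Dual K W.toSubmodule := fun i j =>
    if h : i < j then (B.coord ⟨(i, j), h⟩).comp (inclusion hWG) else 0
  have hcol : ∀ i j k, i < j → j < k → Collinear K {φ i j, φ i k, φ j k} := by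
    intro i j k hij hjk
    simp only [φ, dif_pos hij, dif_pos hjk, dif_pos (hij.trans hjk)]
    exact ht.collinear_coord hindbr B hB hWG hab ⟨(i, j, k), hij, hjk⟩
  have hsep : ∀ x ≠ 0, ∃ f ∈ {f | ∃ i j, i < j ∧ φ i j = f}, f x ≠ 0 := by
    intro x hx
    by_contra! h
    refine hx (inclusion_injective hWG (B.forall_coord_eq_zero_iff.1 fun p => ?_))
    simpa [φ, dif_pos p.2] using h _ ⟨p.1.1, p.1.2, p.2, rfl⟩
  calc finrank K W = finrank K (Dual K W.toSubmodule) := Subspace.dual_finrank_eq.symm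
    _ = finrank K (span K {f | ∃ i j, i < j ∧ φ i j = f}) := by
      rw [span_eq_top_of_ne_zero hsep, finrank_top]
    _ ≤ n - 1 := finrank_span_le_of_collinear n φ hcol
end

section
/- Let μ : D_4 → K \ {0, 1} satisfy μ_{ikj} = 1/μ_{ijk}, μ_{jik} = 1 - μ_{ijk}, and μ_{ijk} μ_{ikl} = μ_{ijl} for all distinct indices in {1,2,3,4}. Define λ_{ijkl} = μ_{ikl}/μ_{jkl}. Then λ_{jkli} = 1 - λ_{ijkl} for all distinct i, j, k, l, provided μ_{jli}, μ_{kli} ∉ {0, 1}. -/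
/-!
Put `a = μ_{ljk}` and `b = μ_{lki}`. The three relations express every value occurring in the
claim through `a` and `b`: `μ_{jli} = 1 - ab`, `μ_{kli} = 1 - b`, `μ_{jkl} = (1 - a)⁻¹` and
`μ_{ikl} = (1 - b⁻¹)⁻¹`. The claim becomes the rational identity
`(1 - ab)/(1 - b) = 1 - (1 - a)/(1 - b⁻¹)`, valid as soon as `b ∉ {0, 1}`, i.e. as soon as
`μ_{kli} = 1 - b ∉ {0, 1}`.
-/

section

variable {K : Type*} [Field K]

theorem one_sub_mul_div_one_sub_eq {a b : K} (hb0 : b ≠ 0) (hb1 : b ≠ 1) :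
    (1 - a * b) / (1 - b) = 1 - (1 - b⁻¹)⁻¹ / (1 - a)⁻¹ := by
  have hb : 1 - b ≠ 0 := sub_ne_zero.mpr hb1.symm
  rw [div_inv_eq_mul]
  field_simp
  ring

variable {ι : Type*} {μ : ι → ι → ι → K}

theorem mu_eq_one_sub_mul
    (hsub : ∀ i j k : ι, i ≠ j → i ≠ k → j ≠ k → μ j i k = 1 - μ i j k)
    (hmul : ∀ i j k l : ι, i ≠ j → i ≠ k → i ≠ l → j ≠ k → j ≠ l → k ≠ l →
      μ i j k * μ i k l = μ i j l)
    {i j k l : ι} (hij : i ≠ j) (hik : i ≠ k) (hil : i ≠ l) (hjk : j ≠ k) (hjl : j ≠ l)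
    (hkl : k ≠ l) :
    μ j l i = 1 - μ l j k * μ l k i := by
  rw [hsub l j i hjl.symm hil.symm hij.symm,
    hmul l j k i hjl.symm hkl.symm hil.symm hjk hij.symm hik.symm]

theorem mu_eq_inv_one_sub
    (hinv : ∀ i j k : ι, i ≠ j → i ≠ k → j ≠ k → μ i k j = (μ i j k)⁻¹)
    (hsub : ∀ i j k : ι, i ≠ j → i ≠ k → j ≠ k → μ j i k = 1 - μ i j k)
    {j k l : ι} (hjk : j ≠ k) (hjl : j ≠ l) (hkl : k ≠ l) :
    μ j k l = (1 - μ l j k)⁻¹ := by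
  rw [hinv j l k hjl hjk hkl.symm, hsub l j k hjl.symm hkl.symm hjk]

end

theorem lambda_relation_generic_general
    (K : Type*) [Field K]
    (μ : Fin 4 → Fin 4 → Fin 4 → K)
    (hinv : ∀ i j k : Fin 4, i ≠ j → i ≠ k → j ≠ k → μ i k j = (μ i j k)⁻¹)
    (hsub : ∀ i j k : Fin 4, i ≠ j → i ≠ k → j ≠ k → μ j i k = 1 - μ i j k)
    (hmul : ∀ i j k l : Fin 4, i ≠ j → i ≠ k → i ≠ l → j ≠ k → j ≠ l → k ≠ l →
      μ i j k * μ i k l = μ i j l)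
    (lam : Fin 4 → Fin 4 → Fin 4 → Fin 4 → K)
    (hlam : ∀ i j k l : Fin 4, lam i j k l = μ i k l / μ j k l) :
    ∀ i j k l : Fin 4, i ≠ j → i ≠ k → i ≠ l → j ≠ k → j ≠ l → k ≠ l →
      μ j l i ≠ 0 → μ j l i ≠ 1 → μ k l i ≠ 0 → μ k l i ≠ 1 →
      lam j k l i = 1 - lam i j k l := by
  intro i j k l hij hik hil hjk hjl hkl _ _ hkli0 hkli1
  have hkli : μ k l i = 1 - μ l k i := hsub l k i hkl.symm hil.symm hik.symm
  have hb0 : μ l k i ≠ 0 := fun h => hkli1 (by rw [hkli, h, sub_zero])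
  have hb1 : μ l k i ≠ 1 := fun h => hkli0 (by rw [hkli, h, sub_self])
  rw [hlam, hlam, mu_eq_one_sub_mul hsub hmul hij hik hil hjk hjl hkl, hkli,
    mu_eq_inv_one_sub hinv hsub hjk hjl hkl, mu_eq_inv_one_sub hinv hsub hik hil hkl,
    hinv l k i hkl.symm hil.symm hik.symm]
  exact one_sub_mul_div_one_sub_eq hb0 hb1

/-- Let `μ : D₄ → K ∖ {0,1}` satisfy `μ_{ikj} = 1/μ_{ijk}`, `μ_{jik} = 1 - μ_{ijk}` and
`μ_{ijk} μ_{ikl} = μ_{ijl}` for all distinct indices in `{1,2,3,4}`.  With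
`λ_{ijkl} = μ_{ikl}/μ_{jkl}`, one has `λ_{jkli} = 1 - λ_{ijkl}` for all distinct
`i, j, k, l`, provided `μ_{jli}, μ_{kli} ∉ {0, 1}`. -/
theorem lambda_relation_generic
    (K : Type*) [Field K]
    (μ : Fin 4 → Fin 4 → Fin 4 → K)
    (hrange : ∀ i j k : Fin 4, i ≠ j → i ≠ k → j ≠ k → μ i j k ≠ 0 ∧ μ i j k ≠ 1)
    (hinv : ∀ i j k : Fin 4, i ≠ j → i ≠ k → j ≠ k → μ i k j = (μ i j k)⁻¹)
    (hsub : ∀ i j k : Fin 4, i ≠ j → i ≠ k → j ≠ k → μ j i k = 1 - μ i j k)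
    (hmul : ∀ i j k l : Fin 4, i ≠ j → i ≠ k → i ≠ l → j ≠ k → j ≠ l → k ≠ l →
      μ i j k * μ i k l = μ i j l)
    (lam : Fin 4 → Fin 4 → Fin 4 → Fin 4 → K)
    (hlam : ∀ i j k l : Fin 4, lam i j k l = μ i k l / μ j k l) :
    ∀ i j k l : Fin 4, i ≠ j → i ≠ k → i ≠ l → j ≠ k → j ≠ l → k ≠ l →
      μ j l i ≠ 0 → μ j l i ≠ 1 → μ k l i ≠ 0 → μ k l i ≠ 1 →
      lam j k l i = 1 - lam i j k l :=
  lambda_relation_generic_general K μ hinv hsub hmul lam hlam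
end
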